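/- arXiv:2202.05978 — 2 statements merged into one kernel-verified Lean document; each statement's English description precedes it below -/
import Mathlib

section
/- Let a, b > 0 and M ≥ 0 be real constants, T > 0, and let ρ : [0,T] → ℝ be continuous with 0 ≤ ρ(s) ≤ M² for all s ∈ [0,T]. If u : [0,T] → ℝ is differentiable with u(0) = 0 and u'(t) = b·e^{−2u(t)}·ρ(t) − a for all t, then for every t ∈ [0,T]: e^{−2u(t)} ≤ e^{2at} and e^{−2u(t)} ≥ 1/(1 + (b/a)·M²). In particular, e^{2u(t)} ≥ e^{−2at}. -/
/-!
With the integrating factor `e^{2at}`, the quantity `w(t) = e^{2u(t) + 2at}` solves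
`w' = 2bρ(t)e^{2at}`, with `w(0) = 1`. Since `ρ ≥ 0`, `w ≥ 1`, i.e. `2u(t) + 2at ≥ 0`, which gives the
first and third bounds. Since `ρ ≤ M²`, `w` grows no faster than `(1 + (b/a)M²)e^{2at}`, whose
derivative is `2(a + bM²)e^{2at}`; hence `e^{2u(t)} ≤ 1 + (b/a)M²`, which is the second bound.
-/

open Set Real

theorem le_on_Icc_of_hasDerivAt_le {f f' g g' : ℝ → ℝ} {a b : ℝ}
    (hf : ∀ x ∈ Icc a b, HasDerivAt f (f' x) x) (hg : ∀ x ∈ Icc a b, HasDerivAt g (g' x) x)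
    (ha : f a ≤ g a) (hle : ∀ x ∈ Ico a b, f' x ≤ g' x) : ∀ x ∈ Icc a b, f x ≤ g x :=
  image_le_of_deriv_right_le_deriv_boundary
    (fun x hx => (hf x hx).continuousAt.continuousWithinAt)
    (fun x hx => (hf x (Ico_subset_Icc_self hx)).hasDerivWithinAt) ha
    (fun x hx => (hg x hx).continuousAt.continuousWithinAt)
    (fun x hx => (hg x (Ico_subset_Icc_self hx)).hasDerivWithinAt) hle

theorem hasDerivAt_exp_two_mul_add_two_mul {u : ℝ → ℝ} {a b r t : ℝ}
    (hu : HasDerivAt u (b * exp (-2 * u t) * r - a) t) :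
    HasDerivAt (fun s => exp (2 * u s + 2 * a * s)) (2 * b * r * exp (2 * a * t)) t := by
  have hexponent : HasDerivAt (fun s => 2 * u s + 2 * a * s)
      (2 * (b * exp (-2 * u t) * r - a) + 2 * a * 1) t :=
    (hu.const_mul 2).add ((hasDerivAt_id t).const_mul (2 * a))
  convert hexponent.exp using 1
  rw [exp_add, show -2 * u t = -(2 * u t) by ring, exp_neg]
  field_simp
  ring

theorem one_div_le_exp_neg_of_exp_add_le {x y c : ℝ} (h : exp (x + y) ≤ c * exp y) :
    1 / c ≤ exp (-x) := by
  have hx : exp x ≤ c := le_of_mul_le_mul_right (by rwa [← exp_add]) (exp_pos y)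
  rw [exp_neg, ← one_div]
  exact one_div_le_one_div_of_le (exp_pos x) hx

theorem uniform_parabolicity_general (a b M T : ℝ) (ha : 0 < a) (hb : 0 < b)
    (ρ : ℝ → ℝ)
    (hρ : ∀ s ∈ Set.Icc (0:ℝ) T, 0 ≤ ρ s ∧ ρ s ≤ M ^ 2)
    (u : ℝ → ℝ) (hu0 : u 0 = 0)
    (hu : ∀ t ∈ Set.Icc (0:ℝ) T, HasDerivAt u (b * Real.exp (-2 * u t) * ρ t - a) t) :
    ∀ t ∈ Set.Icc (0:ℝ) T,
      Real.exp (-2 * u t) ≤ Real.exp (2 * a * t)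
      ∧ 1 / (1 + (b / a) * M ^ 2) ≤ Real.exp (-2 * u t)
      ∧ Real.exp (-2 * a * t) ≤ Real.exp (2 * u t) := by
  intro t ht
  have hw (s) (hs : s ∈ Icc 0 T) := hasDerivAt_exp_two_mul_add_two_mul (hu s hs)
  have hw0 : exp (2 * u 0 + 2 * a * 0) = 1 := by simp [hu0]
  have hbarrier (s : ℝ) : HasDerivAt (fun s => (1 + b / a * M ^ 2) * exp (2 * a * s))
      ((1 + b / a * M ^ 2) * (2 * a * exp (2 * a * s))) s := by
    simpa [mul_comm] using (((hasDerivAt_id s).const_mul (2 * a)).exp).const_mul (1 + b / a * M ^ 2)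
  have hlower : 1 ≤ exp (2 * u t + 2 * a * t) :=
    le_on_Icc_of_hasDerivAt_le (fun s _ => hasDerivAt_const s 1) hw hw0.ge
      (fun s hs => by have := (hρ s (Ico_subset_Icc_self hs)).1; positivity) t ht
  have hupper : exp (2 * u t + 2 * a * t) ≤ (1 + b / a * M ^ 2) * exp (2 * a * t) := by
    refine le_on_Icc_of_hasDerivAt_le hw (fun s _ => hbarrier s) ?_ ?_ t ht
    · rw [hw0, mul_zero, exp_zero, mul_one]
      exact le_add_of_nonneg_right (by positivity)
    · intro s hs
      have hρs := (hρ s (Ico_subset_Icc_self hs)).2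
      have hslope : (1 + b / a * M ^ 2) * (2 * a * exp (2 * a * s))
          = 2 * (a + b * M ^ 2) * exp (2 * a * s) := by
        field_simp
      rw [hslope]
      exact mul_le_mul_of_nonneg_right (by nlinarith) (exp_pos _).le
  have hsum : 0 ≤ 2 * u t + 2 * a * t := one_le_exp_iff.mp hlower
  refine ⟨exp_le_exp.mpr (by linarith), ?_, exp_le_exp.mpr (by linarith)⟩
  rw [neg_mul]
  exact one_div_le_exp_neg_of_exp_add_le hupper

/-- Key computation in Lemma 8.1: if the energy density is bounded by `M²` on `[0,T]`,
then `e^{-2u(t)} ≤ e^{2at}` and `e^{-2u(t)} ≥ 1/(1 + (b/a) M²)`, so in particular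
`e^{2u(t)} ≥ e^{-2at}`. -/
theorem uniform_parabolicity (a b M T : ℝ) (ha : 0 < a) (hb : 0 < b) (hM : 0 ≤ M)
    (hT : 0 < T)
    (ρ : ℝ → ℝ) (hρc : ContinuousOn ρ (Set.Icc 0 T))
    (hρ : ∀ s ∈ Set.Icc (0:ℝ) T, 0 ≤ ρ s ∧ ρ s ≤ M ^ 2)
    (u : ℝ → ℝ) (hu0 : u 0 = 0)
    (hu : ∀ t ∈ Set.Icc (0:ℝ) T, HasDerivAt u (b * Real.exp (-2 * u t) * ρ t - a) t) :
    ∀ t ∈ Set.Icc (0:ℝ) T,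
      Real.exp (-2 * u t) ≤ Real.exp (2 * a * t)
      ∧ 1 / (1 + (b / a) * M ^ 2) ≤ Real.exp (-2 * u t)
      ∧ Real.exp (-2 * a * t) ≤ Real.exp (2 * u t) :=
  uniform_parabolicity_general a b M T ha hb ρ hρ u hu0 hu
end

section
/- Let a, b > 0 be real constants, p > 2, and let ρ : [0,∞) → ℝ be a continuous nonnegative function. If u : [0,∞) → ℝ is differentiable with u'(t) = b·e^{−2u(t)}·ρ(t) − a for all t ≥ 0, then for all 0 ≤ t₀ ≤ t one has e^{p·u(t)} ≤ e^{p·u(t₀)} + 2b·(b(p−2)/(pa))^{(p−2)/2}·∫_{t₀}^{t} ρ(s)^{p/2} ds. -/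
/-!
Along the flow, `d/dt e^{p u} = p e^{p u} (b e^{-2u} ρ - a)`. Young's inequality with exponents
`p/2` and `p/(p-2)` and weight `pa / (b (p-2))` absorbs the forcing term `p b e^{(p-2)u} ρ`
into the damping `p a e^{p u}` up to `2b (b(p-2)/(pa))^{(p-2)/2} ρ^{p/2}`; integrating from
`t₀` to `t` gives the bound.
-/

open Real

lemma young_inequality_weighted_rpow {s w r y : ℝ} (hs : 1 < s) (hw : 0 < w) (hr : 0 ≤ r)
    (hy : 0 ≤ y) : s * r * y ^ (s - 1) ≤ (s - 1) * w * y ^ s + w ^ (1 - s) * r ^ s := by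
  have hs0 : 0 < s := by linarith
  have hs1 : 0 < s - 1 := by linarith
  have young := young_inequality_of_nonneg (mul_nonneg (rpow_nonneg hw.le ((1 - s) / s)) hr)
    (mul_nonneg (rpow_nonneg hw.le ((s - 1) / s)) (rpow_nonneg hy (s - 1)))
    (HolderConjugate.conjExponent hs)
  have hprod : w ^ ((1 - s) / s) * r * (w ^ ((s - 1) / s) * y ^ (s - 1)) = r * y ^ (s - 1) := by
    rw [mul_mul_mul_comm, ← rpow_add hw, ← add_div, show 1 - s + (s - 1) = 0 by ring, zero_div,
      rpow_zero, one_mul]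
  have hfirst : (w ^ ((1 - s) / s) * r) ^ s = w ^ (1 - s) * r ^ s := by
    rw [mul_rpow (rpow_nonneg hw.le _) hr, ← rpow_mul hw.le, div_mul_cancel₀ _ hs0.ne']
  have hsecond : (w ^ ((s - 1) / s) * y ^ (s - 1)) ^ conjExponent s = w * y ^ s := by
    rw [conjExponent, mul_rpow (rpow_nonneg hw.le _) (rpow_nonneg hy _), ← rpow_mul hw.le,
      ← rpow_mul hy, show (s - 1) / s * (s / (s - 1)) = 1 by field_simp, rpow_one,
      mul_div_cancel₀ _ hs1.ne']
  rw [hprod, hfirst, hsecond, conjExponent] at young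
  calc s * r * y ^ (s - 1) = s * (r * y ^ (s - 1)) := by ring
    _ ≤ s * (w ^ (1 - s) * r ^ s / s + w * y ^ s / (s / (s - 1))) := by gcongr
    _ = (s - 1) * w * y ^ s + w ^ (1 - s) * r ^ s := by field_simp; ring

/-- The left side is the time derivative of `exp (p u)` at a point where `u = v`, `ρ = r`. -/
lemma exp_mul_flow_deriv_le {a b p : ℝ} (ha : 0 < a) (hb : 0 < b) (hp : 2 < p) {r : ℝ}
    (hr : 0 ≤ r) (v : ℝ) :
    p * exp (p * v) * (b * exp (-2 * v) * r - a)
      ≤ 2 * b * (b * (p - 2) / (p * a)) ^ ((p - 2) / 2) * r ^ (p / 2) := by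
  have hp2 : 0 < p - 2 := by linarith
  have young := young_inequality_weighted_rpow (s := p / 2) (w := p * a / (b * (p - 2)))
    (by linarith) (by positivity) hr (exp_pos (2 * v)).le
  have hweight :
      (p * a / (b * (p - 2))) ^ (1 - p / 2) = (b * (p - 2) / (p * a)) ^ ((p - 2) / 2) := by
    rw [← inv_div, inv_rpow (by positivity), ← rpow_neg (by positivity)]
    ring_nf
  have hdamping : exp (2 * v) ^ (p / 2) = exp (p * v) := by
    rw [← exp_mul]; ring_nf
  have hforcing : exp (2 * v) ^ (p / 2 - 1) = exp (p * v) * exp (-2 * v) := by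
    rw [← exp_mul, ← exp_add]; ring_nf
  rw [hweight, hdamping, hforcing] at young
  calc p * exp (p * v) * (b * exp (-2 * v) * r - a)
      = 2 * b * (p / 2 * r * (exp (p * v) * exp (-2 * v))) - p * a * exp (p * v) := by ring
    _ ≤ 2 * b * ((p / 2 - 1) * (p * a / (b * (p - 2))) * exp (p * v)
          + (b * (p - 2) / (p * a)) ^ ((p - 2) / 2) * r ^ (p / 2)) - p * a * exp (p * v) := by
        gcongr
    _ = 2 * b * (b * (p - 2) / (p * a)) ^ ((p - 2) / 2) * r ^ (p / 2) := by field_simp; ring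

/-- Integrated form of Lemma 7.1:
`e^{p u(t)} ≤ e^{p u(t₀)} + 2b (b(p-2)/(pa))^{(p-2)/2} ∫_{t₀}^{t} ρ(s)^{p/2} ds`. -/
theorem exp_pu_integral_bound (a b p : ℝ) (ha : 0 < a) (hb : 0 < b) (hp : 2 < p)
    (ρ : ℝ → ℝ) (hρc : ContinuousOn ρ (Set.Ici 0))
    (hρ0 : ∀ t ≥ (0:ℝ), 0 ≤ ρ t)
    (u : ℝ → ℝ)
    (hu : ∀ t ≥ (0:ℝ), HasDerivAt u (b * Real.exp (-2 * u t) * ρ t - a) t) :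
    ∀ t₀ t : ℝ, 0 ≤ t₀ → t₀ ≤ t →
      Real.exp (p * u t)
        ≤ Real.exp (p * u t₀)
            + 2 * b * (b * (p - 2) / (p * a)) ^ ((p - 2) / 2)
                * ∫ s in t₀..t, ρ s ^ (p / 2) := by
  intro t₀ t ht₀ ht
  have hnonneg : Set.Icc t₀ t ⊆ Set.Ici 0 := fun s hs => ht₀.trans hs.1
  have hderiv : ∀ s ∈ Set.Icc t₀ t, HasDerivAt (fun τ => exp (p * u τ))
      (p * exp (p * u s) * (b * exp (-2 * u s) * ρ s - a)) s := fun s hs =>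
    ((hu s (hnonneg hs)).const_mul p).exp.congr_deriv (by ring)
  have hρp : ContinuousOn (fun s => ρ s ^ (p / 2)) (Set.Icc t₀ t) :=
    (hρc.mono hnonneg).rpow_const fun _ _ => Or.inr (by positivity)
  have key := intervalIntegral.sub_le_integral_of_hasDeriv_right_of_le ht
    (fun s hs => (hderiv s hs).continuousAt.continuousWithinAt)
    (fun s hs => (hderiv s (Set.Ioo_subset_Icc_self hs)).hasDerivWithinAt)
    (hρp.integrableOn_Icc.const_mul _)
    (fun s hs => exp_mul_flow_deriv_le ha hb hp (hρ0 s (hnonneg (Set.Ioo_subset_Icc_self hs))) _)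
  rw [intervalIntegral.integral_const_mul] at key
  linarith
end
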